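/- Let ω be a 4×4 antisymmetric matrix of 1-forms (a connection form) and let A = A(α,β) be the block rotation matrix rotating the (e1,e2)-plane by angle α and the (e3,e4)-plane by angle β. Set ω̃ = dA·A⁻¹ + A·ω·A⁻¹. Then ω̃₁³ − ω̃₂⁴ = cos(α+β)(ω₁³ − ω₂⁴) − sin(α+β)(ω₁⁴ + ω₂³) and ω̃₁⁴ + ω̃₂³ = sin(α+β)(ω₁³ − ω₂⁴) + cos(α+β)(ω₁⁴ + ω₂³). In particular, the span of {ω₁³ − ω₂⁴, ω₁⁴ + ω₂³} is invariant under such frame changes. -/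
import Mathlib


/-- Under a Darboux frame change given by the block rotation A(α,β), with
ω̃ = dA·A⁻¹ + A·ω·A⁻¹, the pair of connection forms (ω₁³ − ω₂⁴, ω₁⁴ + ω₂³)
transforms by the rotation of angle α+β; in particular its span is invariant.
One-forms are modelled as elements of a commutative ring R (of e.g. formal
expressions in smooth functions), with ca = cos α, sa = sin α, cb = cos β,
sb = sin β, da = dα, db = dβ, so that cos(α+β) = ca·cb − sa·sb and
sin(α+β) = sa·cb + ca·sb, and dA has entries d(cos α) = −sa·da, etc.
Indices: ω₁³ = ω 0 2, ω₂⁴ = ω 1 3, ω₁⁴ = ω 0 3, ω₂³ = ω 1 2. -/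
theorem connection_form_change_sum {R : Type*} [CommRing R]
    (ca sa cb sb da db : R)
    (hca : ca ^ 2 + sa ^ 2 = 1) (hcb : cb ^ 2 + sb ^ 2 = 1)
    (ω : Matrix (Fin 4) (Fin 4) R) (hanti : Matrix.transpose ω = -ω)
    (A dA ω' : Matrix (Fin 4) (Fin 4) R)
    (hA : A = !![ca, -sa, 0, 0; sa, ca, 0, 0; 0, 0, cb, -sb; 0, 0, sb, cb])
    (hdA : dA = !![-(sa*da), -(ca*da), 0, 0; ca*da, -(sa*da), 0, 0;
                   0, 0, -(sb*db), -(cb*db); 0, 0, cb*db, -(sb*db)])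
    (hω' : ω' = dA * A⁻¹ + A * ω * A⁻¹) :
    ω' 0 2 - ω' 1 3 =
      (ca*cb - sa*sb) * (ω 0 2 - ω 1 3) - (sa*cb + ca*sb) * (ω 0 3 + ω 1 2) ∧
    ω' 0 3 + ω' 1 2 =
      (sa*cb + ca*sb) * (ω 0 2 - ω 1 3) + (ca*cb - sa*sb) * (ω 0 3 + ω 1 2) := by
  have hinv : A⁻¹ = !![ca, sa, 0, 0; -sa, ca, 0, 0; 0, 0, cb, sb; 0, 0, -sb, cb] := by
    apply Matrix.inv_eq_right_inv
    subst hA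
    ext i j
    fin_cases i <;> fin_cases j <;>
      simp [Matrix.mul_apply, Fin.sum_univ_four, Matrix.one_apply, Matrix.vecHead,
        Matrix.vecTail] <;>
      first
        | linear_combination hca
        | linear_combination hcb
        | ring
  have h20 : ω 2 0 = -ω 0 2 := by
    have := congrFun (congrFun hanti 0) 2; simpa [Matrix.transpose_apply] using this
  have h30 : ω 3 0 = -ω 0 3 := by
    have := congrFun (congrFun hanti 0) 3; simpa [Matrix.transpose_apply] using this
  have h21 : ω 2 1 = -ω 1 2 := by
    have := congrFun (congrFun hanti 1) 2; simpa [Matrix.transpose_apply] using this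
  have h31 : ω 3 1 = -ω 1 3 := by
    have := congrFun (congrFun hanti 1) 3; simpa [Matrix.transpose_apply] using this
  subst hA hdA hω'
  rw [hinv]
  constructor <;>
    · simp [Matrix.add_apply, Matrix.mul_apply, Fin.sum_univ_four, Matrix.vecHead,
        Matrix.vecTail, Matrix.vecMul, dotProduct]
      ring
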